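/- arXiv:1608.08348 — 2 statements merged into one kernel-verified Lean document; each statement's English description precedes it below -/
import Mathlib

section
/- Suppose the trapping ball assumption holds, ‖A‖ > 0, ‖u‖ < R, and there is j ∈ ℕ such that: (i) the only v ∈ B_R satisfying H(D^i v) = H(D^i u) for every 0 ≤ i ≤ j is v = u; and (ii) the gradients at u of the real-valued polynomial functions v ↦ (H(D^i v))_m, for 0 ≤ i ≤ j and 1 ≤ m ≤ d_o, span ℝ^d. Then there exists h₀ > 0 such that for every h ∈ (0, h₀] and every integer k ≥ j there is a constant c > 0 (depending on u, k, h) with max_{0≤i≤k} ‖H Ψ_{ih}(u) − H Ψ_{ih}(v)‖ ≥ c·‖v − u‖ for every v ∈ B_R. -/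
/-!
Near `u`, assumption (ii) makes the derivative of `v ↦ (H (D^m v))_{m ≤ j}` injective, and away
from `u` assumption (i) and compactness of `B_R` take over; together they give
`c ‖v - u‖ ≤ max_{m ≤ j} ‖H D^m v - H D^m u‖` on `B_R`. Along trajectories
`d/dt D^m (Ψ_t v) = D^{m+1} (Ψ_t v)`, so by Grönwall and a Lipschitz bound for `D^{j+1}` on `B_R`,
`H Ψ_t u - H Ψ_t v` agrees with `∑_{m ≤ j} t^m/m! (H D^m u - H D^m v)` up to
`O(‖u - v‖ t^{j+1})`. Sampling at `t = 0, h, …, j h` and inverting the Vandermonde matrix recovers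
these coefficients at the cost of a factor `h^{-j}`, so the error of order `h^{j+1}` is absorbed
for small `h`.
-/

open Set

noncomputable section

/-- The formal time derivatives `D^i v` of a solution of
`dv/dt = -A v - B(v,v) + f` at time `0`. -/
def formalDeriv {E : Type*} [AddCommGroup E] [Module ℝ E]
    (A : E → E) (B : E → E → E) (f : E) : ℕ → E → E
  | 0, v => v
  | 1, v => f - A v - B v v
  | (i + 2), v =>
      -(A (formalDeriv A B f (i + 1) v)) -
        ∑ j ∈ (Finset.range (i + 2)).attach,
          ((i + 1).choose j.1 : ℝ) •
            B (formalDeriv A B f j.1 v) (formalDeriv A B f (i + 1 - j.1) v)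
  termination_by i _ => i
  decreasing_by
  · omega
  · have := Finset.mem_range.mp j.2; omega
  · have := Finset.mem_range.mp j.2; omega

open Finset Nat

theorem sum_range_choose_smul_succ {M : Type*} [AddCommGroup M] [Module ℝ M]
    (b : ℕ → ℕ → M) (n : ℕ) :
    ∑ m ∈ range (n + 2), ((n + 1).choose m : ℝ) • b m (n + 1 - m) =
      ∑ m ∈ range (n + 1), (n.choose m : ℝ) • (b (m + 1) (n - m) + b m (n + 1 - m)) := by
  have h := sum_antidiagonal_choose_succ_nsmul (fun i k => b i k) n
  rw [Nat.sum_antidiagonal_eq_sum_range_succ_mk, Nat.sum_antidiagonal_eq_sum_range_succ_mk,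
    Nat.sum_antidiagonal_eq_sum_range_succ_mk] at h
  simp only [Nat.cast_smul_eq_nsmul, smul_add, sum_add_distrib]
  rw [h, add_comm]
  congr 1
  · refine sum_congr rfl fun m hm => ?_
    rw [Nat.choose_symm (Nat.lt_succ_iff.mp (mem_range.mp hm))]
  · refine sum_congr rfl fun m hm => ?_
    rw [Nat.sub_add_comm (Nat.lt_succ_iff.mp (mem_range.mp hm))]

theorem HasDerivWithinAt.sum_choose_smul_bilinear {E : Type*} [NormedAddCommGroup E]
    [NormedSpace ℝ E] (B : E →L[ℝ] E →L[ℝ] E) {x : ℕ → ℝ → E} {s : Set ℝ} {t : ℝ} {n : ℕ}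
    (hx : ∀ m ≤ n, HasDerivWithinAt (x m) (x (m + 1) t) s t) :
    HasDerivWithinAt
      (fun τ => ∑ m ∈ range (n + 1), (n.choose m : ℝ) • B (x m τ) (x (n - m) τ))
      (∑ m ∈ range (n + 2), ((n + 1).choose m : ℝ) • B (x m t) (x (n + 1 - m) t)) s t := by
  rw [sum_range_choose_smul_succ (fun i k => B (x i t) (x k t))]
  refine HasDerivWithinAt.fun_sum fun m hm => ?_
  have hm : m ≤ n := Nat.lt_succ_iff.mp (mem_range.mp hm)
  have hB := (B.hasFDerivAt.comp_hasDerivWithinAt t (hx m hm)).clm_apply (hx (n - m) (by omega))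
  rw [← Nat.sub_add_comm hm] at hB
  exact hB.const_smul _

theorem hasDerivAt_pow_div_factorial (n : ℕ) (s : ℝ) :
    HasDerivAt (fun τ : ℝ => τ ^ (n + 1) / (n + 1)!) (s ^ n / n !) s := by
  refine ((hasDerivAt_pow (n + 1) s).div_const ((n + 1)! : ℝ)).congr_deriv ?_
  rw [factorial_succ, cast_mul, cast_succ, add_tsub_cancel_right]
  field_simp

theorem hasDerivAt_sum_pow_div_factorial_smul {F : Type*} [NormedAddCommGroup F]
    [NormedSpace ℝ F] (c : ℕ → F) (n : ℕ) (s : ℝ) :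
    HasDerivAt (fun τ : ℝ => ∑ m ∈ range (n + 1), (τ ^ m / m !) • c m)
      (∑ m ∈ range n, (s ^ m / m !) • c (m + 1)) s := by
  induction n with
  | zero => simpa using hasDerivAt_const s (c 0)
  | succ n ih =>
    convert ih.add ((hasDerivAt_pow_div_factorial n s).smul_const (c (n + 1))) using 1
    · ext τ
      exact sum_range_succ _ _
    · exact sum_range_succ _ _

theorem norm_sub_sum_pow_div_factorial_smul_le {F : Type*} [NormedAddCommGroup F]
    [NormedSpace ℝ F] {g : ℕ → ℝ → F}
    (hg : ∀ m t, 0 ≤ t → HasDerivWithinAt (g m) (g (m + 1) t) (Ici 0) t) {M : ℝ} (n : ℕ)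
    {t : ℝ} (ht : 0 ≤ t) (hM : ∀ s ∈ Icc 0 t, ‖g n s‖ ≤ M) :
    ‖g 0 t - ∑ m ∈ range n, (t ^ m / m !) • g m 0‖ ≤ M * (t ^ n / n !) := by
  induction n generalizing g t with
  | zero => simpa using hM t ⟨ht, le_rfl⟩
  | succ n ih =>
    have hφ : ∀ s, 0 ≤ s → HasDerivWithinAt
        (fun τ => g 0 τ - ∑ m ∈ range (n + 1), (τ ^ m / m !) • g m 0)
        (g 1 s - ∑ m ∈ range n, (s ^ m / m !) • g (m + 1) 0) (Ici 0) s := fun s hs =>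
      (hg 0 s hs).sub
        (hasDerivAt_sum_pow_div_factorial_smul (fun m => g m 0) n s).hasDerivWithinAt
    refine image_norm_le_of_norm_deriv_right_le_deriv_boundary
      (fun s hs => (hφ s hs.1).continuousWithinAt.mono Icc_subset_Ici_self)
      (fun s hs => (hφ s hs.1).mono (Ici_subset_Ici.mpr hs.1)) (by simp [sum_range_succ'])
      (fun s => (hasDerivAt_pow_div_factorial n s).const_mul M)
      (fun s hs => ih (fun m => hg (m + 1)) hs.1 fun r hr => hM r ⟨hr.1, hr.2.trans hs.2.le⟩)
      ⟨ht, le_rfl⟩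

theorem Matrix.exists_norm_le_mul_norm_sum_smul {ι F : Type*} [Fintype ι] [DecidableEq ι]
    [NormedAddCommGroup F] [NormedSpace ℝ F] (M : Matrix ι ι ℝ) (hM : IsUnit M.det) :
    ∃ C > 0, ∀ y : ι → F, ‖y‖ ≤ C * ‖fun i => ∑ k, M i k • y k‖ := by
  refine ⟨∑ m, ∑ i, |M⁻¹ m i| + 1, by positivity, fun y => ?_⟩
  have hinv : ∀ m, y m = ∑ i, M⁻¹ m i • ∑ k, M i k • y k := fun m => by
    simp_rw [smul_sum, smul_smul]
    rw [sum_comm]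
    simp_rw [← sum_smul, ← Matrix.mul_apply, M.nonsing_inv_mul hM, Matrix.one_apply, ite_smul,
      one_smul, zero_smul, sum_ite_eq, if_pos (Finset.mem_univ m)]
  refine (pi_norm_le_iff_of_nonneg (by positivity)).2 fun m => ?_
  calc ‖y m‖ ≤ ∑ i, |M⁻¹ m i| * ‖fun i => ∑ k, M i k • y k‖ := by
        rw [hinv m]
        refine (norm_sum_le _ _).trans (sum_le_sum fun i _ => ?_)
        rw [norm_smul, Real.norm_eq_abs]
        exact mul_le_mul_of_nonneg_left
          (norm_le_pi_norm (fun i => ∑ k, M i k • y k) i) (abs_nonneg _)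
    _ ≤ (∑ m, ∑ i, |M⁻¹ m i| + 1) * ‖fun i => ∑ k, M i k • y k‖ := by
        rw [← sum_mul]
        refine mul_le_mul_of_nonneg_right ?_ (norm_nonneg _)
        have := single_le_sum (f := fun m => ∑ i, |M⁻¹ m i|)
          (fun m _ => sum_nonneg fun i _ => abs_nonneg (M⁻¹ m i)) (Finset.mem_univ m)
        linarith

theorem exists_pow_mul_norm_le_norm_sum_pow_div_factorial_smul (F : Type*)
    [NormedAddCommGroup F] [NormedSpace ℝ F] (n : ℕ) :
    ∃ C > 0, ∀ h : ℝ, 0 < h → h ≤ 1 → ∀ z : Fin (n + 1) → F,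
      h ^ n * ‖z‖ ≤
        C * ‖fun i : Fin (n + 1) => ∑ m : Fin (n + 1), ((i * h) ^ (m : ℕ) / m !) • z m‖ := by
  set V := Matrix.vandermonde fun i : Fin (n + 1) => (i : ℝ)
  have hdet : IsUnit V.det :=
    (Matrix.det_vandermonde_ne_zero_iff.2 fun i k hik => Fin.ext (by exact_mod_cast hik)).isUnit
  obtain ⟨C, hC, hV⟩ := Matrix.exists_norm_le_mul_norm_sum_smul (F := F) V hdet
  refine ⟨n ! * C, by positivity, fun h hh hh1 z => ?_⟩
  set y : Fin (n + 1) → F := fun m => (h ^ (m : ℕ) / m !) • z m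
  -- the samples are the Vandermonde matrix `(i ^ m)` applied to the rescaled coefficients `y`
  have hsample : (fun i : Fin (n + 1) => ∑ m : Fin (n + 1), ((i * h) ^ (m : ℕ) / m !) • z m) =
      fun i => ∑ m, V i m • y m := by
    ext1 i
    refine sum_congr rfl fun m _ => ?_
    rw [show V i m = (i : ℝ) ^ (m : ℕ) from Matrix.vandermonde_apply _ i m, smul_smul, mul_pow,
      mul_div_assoc]
  have hz : ∀ m, ‖h ^ n • z m‖ ≤ n ! * ‖y m‖ := fun m => by
    have hm : (m : ℕ) ≤ n := Fin.is_le m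
    rw [norm_smul, norm_smul, Real.norm_of_nonneg (by positivity),
      Real.norm_of_nonneg (by positivity), ← mul_assoc]
    refine mul_le_mul_of_nonneg_right ?_ (norm_nonneg _)
    rw [mul_div_assoc', le_div_iff₀ (by positivity), mul_comm (n ! : ℝ)]
    exact mul_le_mul (pow_le_pow_of_le_one hh.le hh1 hm) (by exact_mod_cast factorial_le hm)
      (by positivity) (by positivity)
  calc h ^ n * ‖z‖ = ‖h ^ n • z‖ := by rw [norm_smul, Real.norm_of_nonneg (by positivity)]
    _ ≤ n ! * ‖y‖ := (pi_norm_le_iff_of_nonneg (by positivity)).2 fun m =>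
        (hz m).trans (mul_le_mul_of_nonneg_left (norm_le_pi_norm y m) (by positivity))
    _ ≤ n ! * (C * ‖fun i => ∑ m, V i m • y m‖) :=
        mul_le_mul_of_nonneg_left (hV y) (by positivity)
    _ = _ := by rw [hsample, mul_assoc]

theorem IsCompact.exists_pos_mul_norm_sub_le_norm_sub {E G : Type*} [NormedAddCommGroup E]
    [NormedSpace ℝ E] [FiniteDimensional ℝ E] [NormedAddCommGroup G] [NormedSpace ℝ G]
    {Φ : E → G} {Φ' : E →L[ℝ] G} {K : Set E} {u : E} (hK : IsCompact K)
    (hΦ : ContinuousOn Φ K) (hΦ' : HasFDerivAt Φ Φ' u) (hinj : Function.Injective Φ')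
    (huniq : ∀ v ∈ K, Φ v = Φ u → v = u) :
    ∃ c > 0, ∀ v ∈ K, c * ‖v - u‖ ≤ ‖Φ v - Φ u‖ := by
  obtain ⟨c, hc, hΦ'c⟩ : ∃ c > 0, ∀ x, c * ‖x‖ ≤ ‖Φ' x‖ :=
    antilipschitzWith_iff_exists_mul_le_norm.1
      ((Φ' : E →ₗ[ℝ] G).injective_iff_antilipschitz.1 hinj |>.imp fun _ hK => hK.2)
  obtain ⟨ε, hε, hnear⟩ := Metric.eventually_nhds_iff.1 (hΦ'.isLittleO.def (half_pos hc))
  have hfar_norm : ∀ v ∈ K \ Metric.ball u ε, ε ≤ ‖v - u‖ := fun v hv => by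
    simpa [dist_eq_norm] using hv.2
  obtain ⟨c', hc', hfar⟩ : ∃ c' > 0, ∀ v ∈ K \ Metric.ball u ε, c' ≤ ‖Φ v - Φ u‖ / ‖v - u‖ := by
    refine (hK.diff Metric.isOpen_ball).exists_forall_le' ?_ fun v hv => ?_
    · exact ((hΦ.mono sdiff_subset).sub continuousOn_const).norm.div
        (continuousOn_id.sub continuousOn_const).norm fun v hv => (hε.trans_le (hfar_norm v hv)).ne'
    · have hne : v ≠ u := fun h => by simpa [h] using hε.trans_le (hfar_norm v hv)
      exact div_pos (norm_pos_iff.2 (sub_ne_zero.2 fun h => hne (huniq v hv.1 h)))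
        (hε.trans_le (hfar_norm v hv))
  refine ⟨min (c / 2) c', lt_min (half_pos hc) hc', fun v hv => ?_⟩
  by_cases hvu : dist v u < ε
  · have hlin := hnear hvu
    have hrem : ‖Φ' (v - u)‖ ≤ ‖Φ v - Φ u‖ + ‖Φ v - Φ u - Φ' (v - u)‖ := by
      simpa using norm_sub_le (Φ v - Φ u) (Φ v - Φ u - Φ' (v - u))
    nlinarith [hΦ'c (v - u), min_le_left (c / 2) c', norm_nonneg (v - u)]
  · have hv' : v ∈ K \ Metric.ball u ε := ⟨hv, hvu⟩
    have := hfar v hv'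
    rw [le_div_iff₀ (hε.trans_le (hfar_norm v hv'))] at this
    nlinarith [min_le_right (c / 2) c', norm_nonneg (v - u)]

theorem injective_pi_fderiv_of_span_gradient_eq_top {E E' ι : Type*} [NormedAddCommGroup E]
    [InnerProductSpace ℝ E] [CompleteSpace E] [Fintype ι] [NormedAddCommGroup E']
    [NormedSpace ℝ E']
    (H : E' →L[ℝ] EuclideanSpace ℝ ι) {g : ℕ → E → E'} {u : E}
    (hg : ∀ m, DifferentiableAt ℝ (g m) u) (j : ℕ)
    (hspan : Submodule.span ℝ ((fun p : ℕ × ι => gradient (fun v => H (g p.1 v) p.2) u) ''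
      {p : ℕ × ι | p.1 ≤ j}) = ⊤) :
    Function.Injective
      (ContinuousLinearMap.pi fun m : Fin (j + 1) => H.comp (fderiv ℝ (g m) u)) := by
  refine (injective_iff_map_eq_zero _).2 fun x hx => ?_
  have hker : Submodule.span ℝ ((fun p : ℕ × ι => gradient (fun v => H (g p.1 v) p.2) u) ''
      {p : ℕ × ι | p.1 ≤ j}) ≤ LinearMap.ker (innerₛₗ ℝ x) := by
    refine Submodule.span_le.2 ?_
    rintro _ ⟨⟨m, i⟩, hm, rfl⟩
    have hH : HasFDerivAt (fun v => H (g m v)) (H.comp (fderiv ℝ (g m) u)) u :=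
      H.hasFDerivAt.comp u (hg m).hasFDerivAt
    have hd : HasFDerivAt (fun v => H (g m v) i)
        ((EuclideanSpace.proj i).comp (H.comp (fderiv ℝ (g m) u))) u :=
      (EuclideanSpace.proj (𝕜 := ℝ) i).hasFDerivAt.comp u hH
    have hx' := congrFun hx ⟨m, Nat.lt_succ_of_le hm⟩
    rw [SetLike.mem_coe, LinearMap.mem_ker, innerₛₗ_apply_apply, real_inner_comm,
      inner_gradient_left, hd.fderiv]
    simpa using congrArg (fun y => y i) hx'
  exact inner_self_eq_zero.1 (hker (hspan ▸ Submodule.mem_top))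

structure IsTrappedFlow {E : Type*} [NormedAddCommGroup E] [NormedSpace ℝ E] (F : E → E)
    (R : ℝ) (Ψ : ℝ → E → E) : Prop where
  map_zero : ∀ x, ‖x‖ ≤ R → Ψ 0 x = x
  norm_le : ∀ x, ‖x‖ ≤ R → ∀ t, 0 ≤ t → ‖Ψ t x‖ ≤ R
  hasDerivWithinAt : ∀ x, ‖x‖ ≤ R → ∀ t, 0 ≤ t →
    HasDerivWithinAt (fun s => Ψ s x) (F (Ψ t x)) (Ici 0) t

theorem IsTrappedFlow.norm_sub_le {E : Type*} [NormedAddCommGroup E] [NormedSpace ℝ E]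
    {F : E → E} {R : ℝ} {Ψ : ℝ → E → E} {K : NNReal} (hΨ : IsTrappedFlow F R Ψ)
    (hF : LipschitzOnWith K F (Metric.closedBall 0 R)) {u v : E} (hu : ‖u‖ ≤ R) (hv : ‖v‖ ≤ R)
    {t : ℝ} (ht : 0 ≤ t) : ‖Ψ t u - Ψ t v‖ ≤ ‖u - v‖ * Real.exp (K * t) := by
  have hcont : ∀ x, ‖x‖ ≤ R → ContinuousOn (fun s => Ψ s x) (Icc 0 t) := fun x hx s hs =>
    (hΨ.hasDerivWithinAt x hx s hs.1).continuousWithinAt.mono Icc_subset_Ici_self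
  have hderiv : ∀ x, ‖x‖ ≤ R → ∀ s ∈ Ico (0 : ℝ) t,
      HasDerivWithinAt (fun s => Ψ s x) (F (Ψ s x)) (Ici s) s := fun x hx s hs =>
    (hΨ.hasDerivWithinAt x hx s hs.1).mono (Ici_subset_Ici.mpr hs.1)
  have hmem : ∀ x, ‖x‖ ≤ R → ∀ s ∈ Ico (0 : ℝ) t, Ψ s x ∈ Metric.closedBall 0 R :=
    fun x hx s hs => mem_closedBall_zero_iff.2 (hΨ.norm_le x hx s hs.1)
  have := dist_le_of_trajectories_ODE_of_mem (v := fun _ => F) (fun _ _ => hF)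
    (hcont u hu) (hderiv u hu) (hmem u hu) (hcont v hv) (hderiv v hv) (hmem v hv)
    (by rw [hΨ.map_zero u hu, hΨ.map_zero v hv]) t ⟨ht, le_rfl⟩
  simpa [dist_eq_norm] using this

section FormalDeriv

variable {E : Type*} [NormedAddCommGroup E] [NormedSpace ℝ E]
  (A : E →L[ℝ] E) (B : E →L[ℝ] E →L[ℝ] E) (f : E)

local notation "𝒟" => formalDeriv (fun x => A x) (fun x y => B x y) f

theorem formalDeriv_zero (v : E) : 𝒟 0 v = v := by
  simp [formalDeriv]

theorem formalDeriv_one (v : E) : 𝒟 1 v = f - A v - B v v := by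
  simp [formalDeriv]

theorem formalDeriv_add_two (i : ℕ) (v : E) :
    𝒟 (i + 2) v = -A (𝒟 (i + 1) v) - ∑ m ∈ range (i + 2),
      ((i + 1).choose m : ℝ) • B (𝒟 m v) (𝒟 (i + 1 - m) v) := by
  rw [formalDeriv]
  exact congrArg _ (sum_attach (range (i + 2)) fun m =>
    ((i + 1).choose m : ℝ) • B (𝒟 m v) (𝒟 (i + 1 - m) v))

theorem hasDerivWithinAt_formalDeriv_comp {γ : ℝ → E} {s : Set ℝ} {t : ℝ}
    (hγ : HasDerivWithinAt γ (𝒟 1 (γ t)) s t) (i : ℕ) :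
    HasDerivWithinAt (fun τ => 𝒟 i (γ τ)) (𝒟 (i + 1) (γ t)) s t := by
  induction i using Nat.strong_induction_on with
  | _ i ih =>
    match i with
    | 0 => simpa only [formalDeriv_zero] using hγ
    | 1 =>
      have hA := A.hasFDerivAt.comp_hasDerivWithinAt t (ih 0 one_pos)
      have hB := HasDerivWithinAt.sum_choose_smul_bilinear B (n := 0)
        (x := fun m τ => 𝒟 m (γ τ)) fun m hm => ih m (by omega)
      convert ((hasDerivWithinAt_const t s f).sub hA).sub hB using 1
      · ext τ
        simp [formalDeriv_one, formalDeriv_zero]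
      · rw [formalDeriv_add_two, zero_sub]
    | i + 2 =>
      have hA := A.hasFDerivAt.comp_hasDerivWithinAt t (ih (i + 1) (by omega))
      have hB := HasDerivWithinAt.sum_choose_smul_bilinear B (n := i + 1)
        (x := fun m τ => 𝒟 m (γ τ)) fun m hm => ih m (by omega)
      convert hA.neg.sub hB using 1
      · ext τ
        exact formalDeriv_add_two A B f i (γ τ)
      · exact formalDeriv_add_two A B f (i + 1) (γ t)

theorem contDiff_formalDeriv {n : WithTop ℕ∞} (i : ℕ) : ContDiff ℝ n (𝒟 i) := by
  induction i using Nat.strong_induction_on with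
  | _ i ih =>
    match i with
    | 0 => simpa only [funext (formalDeriv_zero A B f)] using contDiff_fun_id
    | 1 =>
      rw [funext (formalDeriv_one A B f)]
      fun_prop
    | i + 2 =>
      rw [funext (formalDeriv_add_two A B f i)]
      have h := ih (i + 1) (by omega)
      refine h.continuousLinearMap_comp A |>.neg.sub (ContDiff.sum fun m hm => ?_)
      have := mem_range.mp hm
      exact ((B.contDiff.comp (ih m (by omega))).clm_apply
        (ih (i + 1 - m) (by omega))).const_smul _

theorem exists_lipschitzOnWith_formalDeriv [FiniteDimensional ℝ E] (i : ℕ) (R : ℝ) :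
    ∃ K, LipschitzOnWith K (𝒟 i) (Metric.closedBall 0 R) :=
  (contDiff_formalDeriv A B f (n := 1) i).contDiffOn.exists_lipschitzOnWith one_ne_zero
    (convex_closedBall _ _) (isCompact_closedBall _ _)

theorem IsTrappedFlow.exists_norm_sub_sum_le [FiniteDimensional ℝ E] {G : Type*}
    [NormedAddCommGroup G] [NormedSpace ℝ G] {R : ℝ} {Ψ : ℝ → E → E}
    (hΨ : IsTrappedFlow (𝒟 1) R Ψ) (H : E →L[ℝ] G) (n : ℕ) (T : ℝ) :
    ∃ C ≥ 0, ∀ u v, ‖u‖ ≤ R → ‖v‖ ≤ R → ∀ t ∈ Icc 0 T,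
      ‖H (Ψ t u) - H (Ψ t v) - ∑ m ∈ range n, (t ^ m / m !) • (H (𝒟 m u) - H (𝒟 m v))‖ ≤
        C * ‖u - v‖ * t ^ n := by
  obtain ⟨K, hK⟩ := exists_lipschitzOnWith_formalDeriv A B f 1 R
  obtain ⟨L, hL⟩ := exists_lipschitzOnWith_formalDeriv A B f n R
  refine ⟨‖H‖ * L * Real.exp (K * T) / n !, by positivity, fun u v hu hv t ht => ?_⟩
  have hg : ∀ m s, 0 ≤ s → HasDerivWithinAt (fun τ => H (𝒟 m (Ψ τ u)) - H (𝒟 m (Ψ τ v)))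
      (H (𝒟 (m + 1) (Ψ s u)) - H (𝒟 (m + 1) (Ψ s v))) (Ici 0) s := fun m s hs =>
    (H.hasFDerivAt.comp_hasDerivWithinAt s (hasDerivWithinAt_formalDeriv_comp A B f
      (hΨ.hasDerivWithinAt u hu s hs) m)).sub
    (H.hasFDerivAt.comp_hasDerivWithinAt s (hasDerivWithinAt_formalDeriv_comp A B f
      (hΨ.hasDerivWithinAt v hv s hs) m))
  have hM : ∀ s ∈ Icc 0 t, ‖H (𝒟 n (Ψ s u)) - H (𝒟 n (Ψ s v))‖ ≤
      ‖H‖ * L * Real.exp (K * T) * ‖u - v‖ := fun s hs => by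
    have hΨs := hΨ.norm_sub_le hK hu hv hs.1
    have hexp : Real.exp (K * s) ≤ Real.exp (K * T) :=
      Real.exp_le_exp.2 (mul_le_mul_of_nonneg_left (hs.2.trans ht.2) K.2)
    calc ‖H (𝒟 n (Ψ s u)) - H (𝒟 n (Ψ s v))‖ ≤ ‖H‖ * (L * ‖Ψ s u - Ψ s v‖) := by
          rw [← map_sub]
          exact H.le_opNorm_of_le (hL.norm_sub_le
            (mem_closedBall_zero_iff.2 (hΨ.norm_le u hu s hs.1))
            (mem_closedBall_zero_iff.2 (hΨ.norm_le v hv s hs.1)))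
      _ ≤ ‖H‖ * (L * (‖u - v‖ * Real.exp (K * T))) := by gcongr; exact hΨs.trans (by gcongr)
      _ = ‖H‖ * L * Real.exp (K * T) * ‖u - v‖ := by ring
  have := norm_sub_sum_pow_div_factorial_smul_le
    (g := fun m τ => H (𝒟 m (Ψ τ u)) - H (𝒟 m (Ψ τ v))) hg n ht.1 hM
  simp only [formalDeriv_zero, hΨ.map_zero u hu, hΨ.map_zero v hv] at this
  convert this using 1
  ring

theorem IsTrappedFlow.exists_norm_sample_sub_le [FiniteDimensional ℝ E] {G : Type*}
    [NormedAddCommGroup G] [NormedSpace ℝ G] {R : ℝ} {Ψ : ℝ → E → E}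
    (hΨ : IsTrappedFlow (𝒟 1) R Ψ) (H : E →L[ℝ] G) (n : ℕ) :
    ∃ C ≥ 0, ∀ h : ℝ, 0 < h → h ≤ 1 → ∀ u v, ‖u‖ ≤ R → ‖v‖ ≤ R →
      ‖(fun i : Fin (n + 1) => ∑ m : Fin (n + 1), ((i * h) ^ (m : ℕ) / m !) •
          (H (𝒟 m u) - H (𝒟 m v))) -
        fun i : Fin (n + 1) => H (Ψ (i * h) u) - H (Ψ (i * h) v)‖ ≤
        C * ‖u - v‖ * h ^ (n + 1) := by
  obtain ⟨C, hC, hTaylor⟩ := hΨ.exists_norm_sub_sum_le A B f H (n + 1) n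
  refine ⟨C * n ^ (n + 1), by positivity, fun h hh hh1 u v hu hv => ?_⟩
  refine (pi_norm_le_iff_of_nonneg (by positivity)).2 fun i => ?_
  have hi : (i : ℝ) ≤ n := by exact_mod_cast Fin.is_le i
  have ht : (i : ℝ) * h ∈ Icc 0 (n : ℝ) :=
    ⟨by positivity, (mul_le_of_le_one_right (by positivity) hh1).trans hi⟩
  rw [Pi.sub_apply, norm_sub_rev,
    Fin.sum_univ_eq_sum_range (fun m => (((i : ℝ) * h) ^ m / m !) • (H (𝒟 m u) - H (𝒟 m v)))]
  calc _ ≤ C * ‖u - v‖ * ((i : ℝ) * h) ^ (n + 1) := hTaylor u v hu hv _ ht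
    _ ≤ C * ‖u - v‖ * (n * h) ^ (n + 1) := by gcongr
    _ = C * n ^ (n + 1) * ‖u - v‖ * h ^ (n + 1) := by ring

theorem IsTrappedFlow.exists_mul_norm_sub_le_norm_sample [FiniteDimensional ℝ E] {G : Type*}
    [NormedAddCommGroup G] [NormedSpace ℝ G] {R : ℝ} {Ψ : ℝ → E → E}
    (hΨ : IsTrappedFlow (𝒟 1) R Ψ) (H : E →L[ℝ] G) {u : E} (hu : ‖u‖ ≤ R) {j : ℕ} {c : ℝ}
    (hc : 0 < c) (hlower : ∀ v, ‖v‖ ≤ R →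
      c * ‖v - u‖ ≤ ‖fun m : Fin (j + 1) => H (𝒟 m u) - H (𝒟 m v)‖) :
    ∃ h₀ > 0, ∀ h, 0 < h → h ≤ h₀ → ∃ c' > 0, ∀ v, ‖v‖ ≤ R → ∃ i : Fin (j + 1),
      c' * ‖v - u‖ ≤ ‖H (Ψ (i * h) u) - H (Ψ (i * h) v)‖ := by
  obtain ⟨CE, hCE, hsample⟩ := hΨ.exists_norm_sample_sub_le A B f H j
  obtain ⟨CV, hCV, hvand⟩ := exists_pow_mul_norm_le_norm_sum_pow_div_factorial_smul G j
  refine ⟨min 1 (c / (2 * CV * (CE + 1))), by positivity, fun h hh hh₀ =>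
    ⟨c * h ^ j / (2 * CV), by positivity, fun v hv => ?_⟩⟩
  have hh1 : h ≤ 1 := hh₀.trans (min_le_left _ _)
  have hCE : CV * CE * h ≤ c / 2 := by
    have := hh₀.trans (min_le_right _ _)
    rw [le_div_iff₀ (by positivity)] at this
    nlinarith
  set obs : Fin (j + 1) → G := fun i => H (Ψ (i * h) u) - H (Ψ (i * h) v)
  set z : Fin (j + 1) → G := fun m => H (𝒟 m u) - H (𝒟 m v)
  set P : Fin (j + 1) → G := fun i => ∑ m : Fin (j + 1), ((i * h) ^ (m : ℕ) / m !) • z m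
  obtain ⟨i, hi⟩ := Finite.exists_max fun i => ‖obs i‖
  refine ⟨i, le_trans ?_ ((pi_norm_le_iff_of_nonneg (norm_nonneg _)).2 hi)⟩
  have hP : ‖P‖ ≤ ‖obs‖ + CE * ‖v - u‖ * h ^ (j + 1) := by
    have hPobs : ‖P - obs‖ ≤ CE * ‖v - u‖ * h ^ (j + 1) := by
      rw [norm_sub_rev v]
      exact hsample h hh hh1 u v hu hv
    linarith [norm_le_norm_add_norm_sub' P obs]
  -- the Taylor error carries one more power of `h` than is lost in inverting the samples
  have key : h ^ j * (c * ‖v - u‖) ≤ CV * ‖obs‖ + c / 2 * (h ^ j * ‖v - u‖) :=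
    calc h ^ j * (c * ‖v - u‖) ≤ CV * ‖P‖ :=
          (mul_le_mul_of_nonneg_left (hlower v hv) (by positivity)).trans (hvand h hh hh1 z)
      _ ≤ CV * (‖obs‖ + CE * ‖v - u‖ * h ^ (j + 1)) := by gcongr
      _ = CV * ‖obs‖ + CV * CE * h * (h ^ j * ‖v - u‖) := by ring
      _ ≤ CV * ‖obs‖ + c / 2 * (h ^ j * ‖v - u‖) := by gcongr
  rw [div_mul_eq_mul_div, div_le_iff₀ (by positivity)]
  linarith

end FormalDeriv

theorem derivative_assumptions_imply_upper_bound_assumption_general {d dO : ℕ}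
    (A : EuclideanSpace ℝ (Fin d) →L[ℝ] EuclideanSpace ℝ (Fin d))
    (B : EuclideanSpace ℝ (Fin d) →L[ℝ] EuclideanSpace ℝ (Fin d) →L[ℝ] EuclideanSpace ℝ (Fin d))
    (f : EuclideanSpace ℝ (Fin d))
    (R : ℝ)
    (Ψ : ℝ → EuclideanSpace ℝ (Fin d) → EuclideanSpace ℝ (Fin d))
    (hΨ0 : ∀ x, ‖x‖ ≤ R → Ψ 0 x = x)
    (hΨR : ∀ x, ‖x‖ ≤ R → ∀ t : ℝ, 0 ≤ t → ‖Ψ t x‖ ≤ R)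
    (hΨode : ∀ x, ‖x‖ ≤ R → ∀ t : ℝ, 0 ≤ t →
      HasDerivWithinAt (fun s => Ψ s x)
        (f - A (Ψ t x) - B (Ψ t x) (Ψ t x)) (Ici 0) t)
    (H : EuclideanSpace ℝ (Fin d) →L[ℝ] EuclideanSpace ℝ (Fin dO))
    (u : EuclideanSpace ℝ (Fin d)) (hu : ‖u‖ < R)
    (j : ℕ)
    -- Assumption 8 (i): uniqueness of the solution of the system of equations
    (huniq : ∀ v : EuclideanSpace ℝ (Fin d), ‖v‖ ≤ R →
      (∀ i ≤ j, H (formalDeriv (fun x => A x) (fun x y => B x y) f i v) =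
        H (formalDeriv (fun x => A x) (fun x y => B x y) f i u)) → v = u)
    -- Assumption 8 (ii): the gradients span `ℝ^d`
    (hspan : Submodule.span ℝ
      ((fun p : ℕ × Fin dO => gradient
        (fun v => H (formalDeriv (fun x => A x) (fun x y => B x y) f p.1 v) p.2) u) ''
        {p : ℕ × Fin dO | p.1 ≤ j}) = ⊤) :
    ∃ h₀ : ℝ, 0 < h₀ ∧ ∀ h : ℝ, 0 < h → h ≤ h₀ → ∀ k : ℕ, j ≤ k →
      ∃ c : ℝ, 0 < c ∧ ∀ v : EuclideanSpace ℝ (Fin d), ‖v‖ ≤ R →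
        ∃ i ≤ k, c * ‖v - u‖ ≤ ‖H (Ψ (i * h) u) - H (Ψ (i * h) v)‖ := by
  set 𝒟 := formalDeriv (fun x => A x) (fun x y => B x y) f
  have hflow : IsTrappedFlow (𝒟 1) R Ψ :=
    ⟨hΨ0, hΨR, fun x hx t ht => by simpa only [𝒟, formalDeriv_one] using hΨode x hx t ht⟩
  have hdiff : ∀ m, Differentiable ℝ (𝒟 m) := fun m =>
    (contDiff_formalDeriv A B f (n := 1) m).differentiable one_ne_zero
  obtain ⟨c, hc, hlower⟩ :=
    (isCompact_closedBall (0 : EuclideanSpace ℝ (Fin d)) R).exists_pos_mul_norm_sub_le_norm_sub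
      (Φ := fun v (m : Fin (j + 1)) => H (𝒟 m v))
      (continuous_pi fun m : Fin (j + 1) => H.continuous.comp (hdiff m).continuous).continuousOn
      (hasFDerivAt_pi.2 fun m => H.hasFDerivAt.comp u (hdiff m u).hasFDerivAt)
      (injective_pi_fderiv_of_span_gradient_eq_top H (fun m => hdiff m u) j hspan)
      (fun v hv hΦ => huniq v (mem_closedBall_zero_iff.1 hv) fun i hi =>
        congrFun hΦ ⟨i, Nat.lt_succ_of_le hi⟩)
  obtain ⟨h₀, hh₀, hsample⟩ := hflow.exists_mul_norm_sub_le_norm_sample A B f H hu.le hc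
    fun v hv => (hlower v (mem_closedBall_zero_iff.2 hv)).trans_eq (norm_sub_rev _ _)
  refine ⟨h₀, hh₀, fun h hh hhh₀ k hk => ?_⟩
  obtain ⟨c', hc', hc'v⟩ := hsample h hh hhh₀
  exact ⟨c', hc', fun v hv => (hc'v v hv).elim fun i hi => ⟨i, by omega, hi⟩⟩

/-- Proposition: assumptions on derivatives imply the assumption
for the upper bounds: if the observed formal derivatives up to order `j`
uniquely determine the initial condition `u` in `B_R` and their coordinate
gradients span `ℝ^d`, then for all sufficiently small interobservation times
`h` and every `k ≥ j` there is `c > 0` with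
`max_{0≤i≤k} ‖H Ψ_{ih}(u) - H Ψ_{ih}(v)‖ ≥ c ‖v - u‖` on `B_R`. -/
theorem derivative_assumptions_imply_upper_bound_assumption {d dO : ℕ}
    (A : EuclideanSpace ℝ (Fin d) →L[ℝ] EuclideanSpace ℝ (Fin d))
    (B : EuclideanSpace ℝ (Fin d) →L[ℝ] EuclideanSpace ℝ (Fin d) →L[ℝ] EuclideanSpace ℝ (Fin d))
    (f : EuclideanSpace ℝ (Fin d))
    (R δ : ℝ) (hR : 0 < R) (hδ : 0 < δ) (hA : 0 < ‖A‖)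
    (htrap : ∀ x : EuclideanSpace ℝ (Fin d),
      ‖x‖ ∈ Icc R (R + δ) → (inner ℝ (f - A x - B x x) x : ℝ) ≤ 0)
    (Ψ : ℝ → EuclideanSpace ℝ (Fin d) → EuclideanSpace ℝ (Fin d))
    (hΨ0 : ∀ x, ‖x‖ ≤ R → Ψ 0 x = x)
    (hΨR : ∀ x, ‖x‖ ≤ R → ∀ t : ℝ, 0 ≤ t → ‖Ψ t x‖ ≤ R)
    (hΨode : ∀ x, ‖x‖ ≤ R → ∀ t : ℝ, 0 ≤ t →
      HasDerivWithinAt (fun s => Ψ s x)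
        (f - A (Ψ t x) - B (Ψ t x) (Ψ t x)) (Ici 0) t)
    (H : EuclideanSpace ℝ (Fin d) →L[ℝ] EuclideanSpace ℝ (Fin dO))
    (u : EuclideanSpace ℝ (Fin d)) (hu : ‖u‖ < R)
    (j : ℕ)
    -- Assumption 8 (i): uniqueness of the solution of the system of equations
    (huniq : ∀ v : EuclideanSpace ℝ (Fin d), ‖v‖ ≤ R →
      (∀ i ≤ j, H (formalDeriv (fun x => A x) (fun x y => B x y) f i v) =
        H (formalDeriv (fun x => A x) (fun x y => B x y) f i u)) → v = u)
    -- Assumption 8 (ii): the gradients span `ℝ^d`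
    (hspan : Submodule.span ℝ
      ((fun p : ℕ × Fin dO => gradient
        (fun v => H (formalDeriv (fun x => A x) (fun x y => B x y) f p.1 v) p.2) u) ''
        {p : ℕ × Fin dO | p.1 ≤ j}) = ⊤) :
    ∃ h₀ : ℝ, 0 < h₀ ∧ ∀ h : ℝ, 0 < h → h ≤ h₀ → ∀ k : ℕ, j ≤ k →
      ∃ c : ℝ, 0 < c ∧ ∀ v : EuclideanSpace ℝ (Fin d), ‖v‖ ≤ R →
        ∃ i ≤ k, c * ‖v - u‖ ≤ ‖H (Ψ (i * h) u) - H (Ψ (i * h) v)‖ :=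
  derivative_assumptions_imply_upper_bound_assumption_general A B f R Ψ hΨ0 hΨR hΨode H u hu j huniq
    hspan
end
end

section
/- Consider the Lorenz 96' system in ℝ^d, d ≥ 4, with A the identity, bilinear form B(u,ũ)_i = −(1/2)(ũ_{i−1}u_{i+1} + u_{i−1}ũ_{i+1} − ũ_{i−2}u_{i−1} − u_{i−2}ũ_{i−1}) with indices taken modulo d, and f = (8, …, 8). Then for every u ∈ ℝ^d with u_m ≠ 0 for all 1 ≤ m ≤ d: (i) any v ∈ ℝ^d satisfying (D^i v)_m = (D^i u)_m for every m ∈ {1, 2, 3} and every 0 ≤ i ≤ d − 3 equals u; and (ii) the gradients at u of the polynomial functions v ↦ (D^i v)_m, for m ∈ {1, 2, 3} and 0 ≤ i ≤ d − 3, span ℝ^d. -/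
noncomputable section

/-- The bilinear part of the Lorenz 96' system:
`B(u,ũ)_i = -(1/2)(ũ_{i-1}u_{i+1} + u_{i-1}ũ_{i+1} - ũ_{i-2}u_{i-1} - u_{i-2}ũ_{i-1})`,
with indices modulo `d`. -/
def lorenz96B (d : ℕ) [NeZero d] :
    EuclideanSpace ℝ (Fin d) → EuclideanSpace ℝ (Fin d) → EuclideanSpace ℝ (Fin d) :=
  fun u w => (WithLp.equiv 2 (Fin d → ℝ)).symm (fun i =>
    -(1 / 2) * (w (i - 1) * u (i + 1) + u (i - 1) * w (i + 1)
      - w (i - 2) * u (i - 1) - u (i - 2) * w (i - 1)))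

/-- The constant forcing `(8, …, 8)` of the Lorenz 96' system. -/
def lorenz96f (d : ℕ) : EuclideanSpace ℝ (Fin d) :=
  (WithLp.equiv 2 (Fin d → ℝ)).symm (fun _ => 8)

/-!
The coordinate `t` of `D^n v` depends only on `v_{t-2n}, …, v_{t+n}` (indices modulo `d`), and
as long as `3n < d` the two extreme coordinates occur only linearly: `(D^n v)_t` is affine in
`v_{t+n}` with slope `∏_{k<n} v_{t+k-1}` and affine in `v_{t-2n}` with slope
`∏_{k<n} (-v_{t-2k-1})`. At a point `u` without zero coordinates these slopes do not vanish, so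
once `v` is known to agree with `u` on the window `[-2n, n+2]`, the observations of `D^{n+1}` at
`t = 2, 1, 0` successively pin down `v_{n+3}`, `v_{-2n-1}` and `v_{-2n-2}`. After `⌊(d-1)/3⌋`
such steps the window covers `ℤ/d`. The same peeling, applied to the differentials at `u`, shows
that a vector orthogonal to all observed gradients vanishes.
-/

open Finset

section FormalDeriv

variable {E : Type*} [AddCommGroup E] [Module ℝ E] (A : E → E) (B : E → E → E) (f : E)

lemma formalDeriv_zero_s19 (v : E) : formalDeriv A B f 0 v = v := by
  rw [formalDeriv]

lemma formalDeriv_succ (n : ℕ) (v : E) :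
    formalDeriv A B f (n + 1) v = (if n = 0 then f else 0) - A (formalDeriv A B f n v) -
      ∑ p ∈ antidiagonal n, (n.choose p.1 : ℝ) •
        B (formalDeriv A B f p.1 v) (formalDeriv A B f p.2 v) := by
  rcases n with _ | m
  · simp [formalDeriv]
  · rw [formalDeriv, if_neg m.succ_ne_zero, zero_sub, sum_attach (range (m + 2))
      (fun j => ((m + 1).choose j : ℝ) •
        B (formalDeriv A B f j v) (formalDeriv A B f (m + 1 - j) v)),
      Nat.sum_antidiagonal_eq_sum_range_succ (fun i j => ((m + 1).choose i : ℝ) •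
        B (formalDeriv A B f i v) (formalDeriv A B f j v))]

end FormalDeriv

theorem Finset.Nat.sum_antidiagonal_choose_mul_swap {R : Type*} [CommSemiring R] (n : ℕ)
    (F : ℕ → ℕ → R) :
    ∑ p ∈ antidiagonal n, (n.choose p.1 : R) * F p.2 p.1 =
      ∑ p ∈ antidiagonal n, (n.choose p.1 : R) * F p.1 p.2 := by
  rw [← Finset.Nat.sum_antidiagonal_swap]
  refine sum_congr rfl fun p hp => ?_
  rw [Prod.fst_swap, Prod.snd_swap, Nat.choose_symm_of_eq_add (mem_antidiagonal.mp hp).symm]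

section AffineInCoord

variable {ι : Type*} [DecidableEq ι]

def AffineInCoordAt (φ : EuclideanSpace ℝ ι → ℝ) (S : Set ι) (e : ι)
    (u : EuclideanSpace ℝ ι) : Prop :=
  (∀ v v' : EuclideanSpace ℝ ι, (∀ x ∈ insert e S, v x = v' x) → φ v = φ v') ∧
    ∃ c ≠ 0, ∀ s : ℝ, φ (u + EuclideanSpace.single e s) = φ u + c * s

namespace AffineInCoordAt

variable {φ : EuclideanSpace ℝ ι → ℝ} {S : Set ι} {e : ι} {u : EuclideanSpace ℝ ι}

lemma coord_eq (h : AffineInCoordAt φ S e u) {v : EuclideanSpace ℝ ι}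
    (hS : ∀ x ∈ S, v x = u x) (hφ : φ v = φ u) : v e = u e := by
  obtain ⟨hloc, c, hc, haff⟩ := h
  have hv : φ v = φ u + c * (v e - u e) := by
    rw [← haff]
    refine hloc _ _ fun x hx => ?_
    by_cases hxe : x = e
    · subst hxe; simp
    · simp [hxe, hS x (hx.resolve_left hxe)]
  rw [hφ, left_eq_add, mul_eq_zero, sub_eq_zero] at hv
  exact hv.resolve_left hc

lemma coord_eq_zero [Fintype ι] (h : AffineInCoordAt φ S e u) (hd : DifferentiableAt ℝ φ u)
    {w : EuclideanSpace ℝ ι} (hS : ∀ x ∈ S, w x = 0) (hφ : fderiv ℝ φ u w = 0) : w e = 0 := by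
  obtain ⟨hloc, c, hc, haff⟩ := h
  have hline : (fun s : ℝ => φ (u + s • w)) = fun s => φ u + c * w e * s := by
    funext s
    rw [mul_assoc, ← mul_comm s, ← haff]
    refine hloc _ _ fun x hx => ?_
    by_cases hxe : x = e
    · subst hxe; simp
    · simp [hxe, hS x (hx.resolve_left hxe)]
  have hslope : HasLineDerivAt ℝ φ (c * w e) u w := by
    rw [HasLineDerivAt, hline]
    simpa using ((hasDerivAt_id (0 : ℝ)).const_mul (c * w e)).const_add (φ u)
  have := (hd.hasFDerivAt.hasLineDerivAt w).unique hslope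
  rw [hφ, eq_comm, mul_eq_zero] at this
  exact this.resolve_left hc

end AffineInCoordAt

end AffineInCoord

-- `Fin d` as the ring `ℤ/d`: integer indices are cast, hence read modulo `d`.
open Fin.CommRing

lemma Fin.intCast_ne_intCast_of_lt {d : ℕ} [NeZero d] {a b : ℤ} (h₁ : a < b) (h₂ : b < a + d) :
    (a : Fin d) ≠ (b : Fin d) := by
  rw [Ne, CharP.intCast_eq_intCast (Fin d) d, Int.modEq_iff_dvd]
  intro h
  have := Int.eq_zero_of_abs_lt_dvd h (abs_lt.mpr ⟨by omega, by omega⟩)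
  omega

lemma Fin.exists_mem_Ico_intCast_eq {d : ℕ} [NeZero d] (a : ℤ) (x : Fin d) :
    ∃ s ∈ Set.Ico a (a + d), (s : Fin d) = x := by
  have hd : (0 : ℤ) < d := by exact_mod_cast NeZero.pos d
  refine ⟨a + (x - a) % d, ⟨by linarith [Int.emod_nonneg (x - a) hd.ne'],
    by linarith [Int.emod_lt_of_pos (x - a) hd]⟩, ?_⟩
  conv_rhs => rw [← Fin.cast_val_eq_self x, ← Int.cast_natCast]
  rw [CharP.intCast_eq_intCast (Fin d) d]
  calc a + ((x : ℤ) - a) % d ≡ a + ((x : ℤ) - a) [ZMOD d] := (Int.mod_modEq _ _).add_left a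
    _ = x := by ring

namespace Lorenz96

variable {d : ℕ} [NeZero d]

def derivCoord (n : ℕ) (t : ℤ) (v : EuclideanSpace ℝ (Fin d)) : ℝ :=
  formalDeriv (fun x => x) (lorenz96B d) (lorenz96f d) n v t

lemma derivCoord_zero (t : ℤ) (v : EuclideanSpace ℝ (Fin d)) : derivCoord 0 t v = v t := by
  rw [derivCoord, formalDeriv_zero_s19]

lemma derivCoord_succ (n : ℕ) (t : ℤ) (v : EuclideanSpace ℝ (Fin d)) :
    derivCoord (n + 1) t v = (if n = 0 then 8 else 0) - derivCoord n t v +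
      ∑ p ∈ antidiagonal n, (n.choose p.1 : ℝ) *
        (derivCoord p.1 (t - 1) v * derivCoord p.2 (t + 1) v -
          derivCoord p.1 (t - 2) v * derivCoord p.2 (t - 1) v) := by
  have hB (x y : EuclideanSpace ℝ (Fin d)) : lorenz96B d x y t = -(1 / 2) *
      ((y (t - 1 : ℤ) * x (t + 1 : ℤ) - y (t - 2 : ℤ) * x (t - 1 : ℤ)) +
        (x (t - 1 : ℤ) * y (t + 1 : ℤ) - x (t - 2 : ℤ) * y (t - 1 : ℤ))) := by
    simp only [lorenz96B, WithLp.equiv_symm_apply, PiLp.toLp_apply, Int.cast_sub, Int.cast_add,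
      Int.cast_one, Int.cast_ofNat]
    ring
  have hf : (if n = 0 then lorenz96f d else 0) t = if n = 0 then (8 : ℝ) else 0 := by
    split_ifs <;> rfl
  set D := formalDeriv (fun x => x) (lorenz96B d) (lorenz96f d)
  simp only [derivCoord, formalDeriv_succ, WithLp.ofLp_sub, WithLp.ofLp_sum, WithLp.ofLp_smul,
    Pi.sub_apply, Finset.sum_apply, Pi.smul_apply, smul_eq_mul, hB, mul_add, sum_add_distrib, hf]
  -- the two halves of the symmetrised `B` contribute equally
  rw [Nat.sum_antidiagonal_choose_mul_swap n (fun a b => -(1 / 2) *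
    (D a v (t - 1 : ℤ) * D b v (t + 1 : ℤ) - D a v (t - 2 : ℤ) * D b v (t - 1 : ℤ))),
    ← sum_add_distrib, sub_eq_add_neg _ (Finset.sum _ _), ← sum_neg_distrib]
  congr 1
  exact sum_congr rfl fun _ _ => by ring

lemma derivCoord_congr (n : ℕ) (t : ℤ) {v v' : EuclideanSpace ℝ (Fin d)}
    (h : ∀ s : ℤ, t - 2 * n ≤ s → s ≤ t + n → v s = v' s) :
    derivCoord n t v = derivCoord n t v' := by
  induction n using Nat.strong_induction_on generalizing t with
  | _ n ih =>
  rcases n with _ | n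
  · simpa [derivCoord_zero] using h t (by omega) (by omega)
  · have key : ∀ m ≤ n, ∀ r : ℤ, t - 2 ≤ r → r ≤ t + 1 →
        derivCoord m r v = derivCoord m r v' := fun m hm r h₁ h₂ =>
      ih m (by omega) r fun s hs₁ hs₂ => h s (by omega) (by omega)
    rw [derivCoord_succ, derivCoord_succ, key n le_rfl t (by omega) (by omega)]
    congr 1
    refine sum_congr rfl fun p hp => ?_
    have hp : p.1 + p.2 = n := mem_antidiagonal.mp hp
    rw [key p.1 (by omega) (t - 1) (by omega) (by omega),
      key p.2 (by omega) (t + 1) (by omega) (by omega),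
      key p.1 (by omega) (t - 2) (by omega) (by omega),
      key p.2 (by omega) (t - 1) (by omega) (by omega)]

lemma differentiable_derivCoord (n : ℕ) (t : ℤ) :
    Differentiable ℝ (derivCoord (d := d) n t) := by
  induction n using Nat.strong_induction_on generalizing t with
  | _ n ih =>
  rcases n with _ | n
  · simp only [funext (derivCoord_zero t)]
    exact (EuclideanSpace.proj (𝕜 := ℝ) (t : Fin d)).differentiable
  · simp only [funext (derivCoord_succ n t)]
    have hdiff := fun m (hm : m ≤ n) r => ih m (Nat.lt_succ_of_le hm) r
    refine ((differentiable_const _).sub (ih n n.lt_succ_self t)).add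
      (Differentiable.fun_sum fun p hp => ?_)
    have hp : p.1 + p.2 = n := mem_antidiagonal.mp hp
    fun_prop (disch := omega)

lemma derivCoord_add_single_of_ne {n : ℕ} {t : ℤ} {e : Fin d}
    (h : ∀ r : ℤ, t - 2 * n ≤ r → r ≤ t + n → (r : Fin d) ≠ e)
    (v : EuclideanSpace ℝ (Fin d)) (s : ℝ) :
    derivCoord n t (v + EuclideanSpace.single e s) = derivCoord n t v :=
  derivCoord_congr n t fun r h₁ h₂ => by simp [h r h₁ h₂]

lemma derivCoord_add_single_right {n : ℕ} (hn : 3 * n < d) (t : ℤ)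
    (v : EuclideanSpace ℝ (Fin d)) (s : ℝ) :
    derivCoord n t (v + EuclideanSpace.single ((t + n : ℤ) : Fin d) s) =
      derivCoord n t v + (∏ k ∈ range n, v ((t + k - 1 : ℤ) : Fin d)) * s := by
  induction n generalizing t with
  | zero => simp [derivCoord_zero]
  | succ n ih =>
    set e : ℤ := t + (n + 1 : ℕ)
    have keep : ∀ (m : ℕ) (r : ℤ), r + m < e → e < r - 2 * m + d →
        derivCoord m r (v + EuclideanSpace.single (e : Fin d) s) = derivCoord m r v :=
      fun m r h₁ h₂ => derivCoord_add_single_of_ne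
        (fun q hq₁ hq₂ => Fin.intCast_ne_intCast_of_lt (by omega) (by omega)) v s
    have he : (e : Fin d) = ((t + 1 + n : ℤ) : Fin d) := by congr 1; omega
    rw [← sub_eq_iff_eq_add', derivCoord_succ, derivCoord_succ, keep n t (by omega) (by omega),
      add_sub_add_left_eq_sub, ← sum_sub_distrib,
      sum_eq_single_of_mem (0, n) (mem_antidiagonal.mpr (zero_add n))]
    · rw [keep 0 (t - 1) (by omega) (by omega), keep 0 (t - 2) (by omega) (by omega),
        keep n (t - 1) (by omega) (by omega), he, ih (by omega), prod_range_succ']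
      simp only [derivCoord_zero, Nat.choose_zero_right, Nat.cast_one, Nat.cast_zero, add_zero]
      rw [show ∏ k ∈ range n, v ((t + 1 + k - 1 : ℤ) : Fin d) =
          ∏ k ∈ range n, v ((t + (k + 1 : ℕ) - 1 : ℤ) : Fin d) from
        prod_congr rfl fun k _ => by push_cast; ring_nf]
      ring
    · rintro ⟨a, b⟩ hp hne
      simp only [HasAntidiagonal.mem_antidiagonal, ne_eq, Prod.mk.injEq] at hp hne
      rw [keep a (t - 1) (by omega) (by omega), keep b (t + 1) (by omega) (by omega),
        keep a (t - 2) (by omega) (by omega), keep b (t - 1) (by omega) (by omega), sub_self]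

lemma derivCoord_add_single_left {n : ℕ} (hn : 3 * n < d) (t : ℤ)
    (v : EuclideanSpace ℝ (Fin d)) (s : ℝ) :
    derivCoord n t (v + EuclideanSpace.single ((t - 2 * n : ℤ) : Fin d) s) =
      derivCoord n t v + (∏ k ∈ range n, -v ((t - 2 * k - 1 : ℤ) : Fin d)) * s := by
  induction n generalizing t with
  | zero => simp [derivCoord_zero]
  | succ n ih =>
    set e : ℤ := t - 2 * (n + 1 : ℕ)
    have keep : ∀ (m : ℕ) (r : ℤ), e < r - 2 * m → r + m < e + d →
        derivCoord m r (v + EuclideanSpace.single (e : Fin d) s) = derivCoord m r v :=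
      fun m r h₁ h₂ => derivCoord_add_single_of_ne
        (fun q hq₁ hq₂ => (Fin.intCast_ne_intCast_of_lt (by omega) (by omega)).symm) v s
    have he : (e : Fin d) = ((t - 2 - 2 * n : ℤ) : Fin d) := by congr 1; omega
    rw [← sub_eq_iff_eq_add', derivCoord_succ, derivCoord_succ, keep n t (by omega) (by omega),
      add_sub_add_left_eq_sub, ← sum_sub_distrib,
      sum_eq_single_of_mem (n, 0) (mem_antidiagonal.mpr (add_zero n))]
    · rw [keep n (t - 1) (by omega) (by omega), keep 0 (t + 1) (by omega) (by omega),
        keep 0 (t - 1) (by omega) (by omega), he, ih (by omega), prod_range_succ']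
      simp only [derivCoord_zero, Nat.choose_self, Nat.cast_one, Nat.cast_zero, mul_zero,
        sub_zero]
      rw [show ∏ k ∈ range n, -v ((t - 2 - 2 * k - 1 : ℤ) : Fin d) =
          ∏ k ∈ range n, -v ((t - 2 * (k + 1 : ℕ) - 1 : ℤ) : Fin d) from
        prod_congr rfl fun k _ => by push_cast; ring_nf]
      ring
    · rintro ⟨a, b⟩ hp hne
      simp only [HasAntidiagonal.mem_antidiagonal, ne_eq, Prod.mk.injEq] at hp hne
      rw [keep a (t - 1) (by omega) (by omega), keep b (t + 1) (by omega) (by omega),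
        keep a (t - 2) (by omega) (by omega), keep b (t - 1) (by omega) (by omega), sub_self]

variable {u : EuclideanSpace ℝ (Fin d)}

lemma affineInCoordAt_derivCoord_right (hu : ∀ m, u m ≠ 0) {n : ℕ} (hn : 3 * n < d) (t : ℤ) :
    AffineInCoordAt (derivCoord n t) (Int.cast '' Set.Ico (t - 2 * n) (t + n))
      ((t + n : ℤ) : Fin d) u := by
  refine ⟨fun v v' h => derivCoord_congr n t fun s h₁ h₂ => h _ ?_,
    _, prod_ne_zero_iff.mpr fun k _ => hu _, derivCoord_add_single_right hn t u⟩
  rcases h₂.eq_or_lt with rfl | h₂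
  exacts [Set.mem_insert _ _, Set.mem_insert_of_mem _ ⟨s, ⟨h₁, h₂⟩, rfl⟩]

lemma affineInCoordAt_derivCoord_left (hu : ∀ m, u m ≠ 0) {n : ℕ} (hn : 3 * n < d) (t : ℤ) :
    AffineInCoordAt (derivCoord n t) (Int.cast '' Set.Ioc (t - 2 * n) (t + n))
      ((t - 2 * n : ℤ) : Fin d) u := by
  refine ⟨fun v v' h => derivCoord_congr n t fun s h₁ h₂ => h _ ?_,
    _, prod_ne_zero_iff.mpr fun k _ => neg_ne_zero.mpr (hu _), derivCoord_add_single_left hn t u⟩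
  rcases h₁.eq_or_lt with rfl | h₁
  exacts [Set.mem_insert _ _, Set.mem_insert_of_mem _ ⟨s, ⟨h₁, h₂⟩, rfl⟩]

lemma forall_of_window_edges (P : Fin d → Prop)
    (hright : ∀ n : ℕ, 3 * n < d → ∀ t : ℤ, 0 ≤ t → t ≤ 2 →
      (∀ x ∈ (Int.cast '' Set.Ico (t - 2 * n) (t + n) : Set (Fin d)), P x) → P (t + n : ℤ))
    (hleft : ∀ n : ℕ, 3 * n < d → ∀ t : ℤ, 0 ≤ t → t ≤ 2 →
      (∀ x ∈ (Int.cast '' Set.Ioc (t - 2 * n) (t + n) : Set (Fin d)), P x) → P (t - 2 * n : ℤ))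
    (x : Fin d) : P x := by
  have window : ∀ n : ℕ, 3 * n < d → ∀ s : ℤ, -2 * n ≤ s → s ≤ n + 2 → P s := by
    intro n
    induction n with
    | zero =>
      intro _ s h₁ h₂
      simpa using hright 0 (by omega) s (by omega) (by omega) (by simp)
    | succ n ih =>
      intro hn s h₁ h₂
      have ih := ih (by omega)
      have hr : P ((n + 3 : ℤ) : Fin d) := by
        have := hright (n + 1) hn 2 (by norm_num) (by norm_num)
          (Set.forall_mem_image.2 fun s ⟨h₁, h₂⟩ => ih s (by omega) (by omega))
        rwa [show (2 : ℤ) + (n + 1 : ℕ) = n + 3 by push_cast; ring] at this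
      have hl₁ : P ((-2 * n - 1 : ℤ) : Fin d) := by
        have := hleft (n + 1) hn 1 (by norm_num) (by norm_num)
          (Set.forall_mem_image.2 fun s ⟨h₁, h₂⟩ => ih s (by omega) (by omega))
        rwa [show (1 : ℤ) - 2 * (n + 1 : ℕ) = -2 * n - 1 by push_cast; ring] at this
      have hl₀ : P ((-2 * n - 2 : ℤ) : Fin d) := by
        have := hleft (n + 1) hn 0 le_rfl (by norm_num) (Set.forall_mem_image.2 fun s ⟨h₁, h₂⟩ => by
          rcases eq_or_ne s (-2 * n - 1) with rfl | hs
          exacts [hl₁, ih s (by omega) (by omega)])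
        rwa [show (0 : ℤ) - 2 * (n + 1 : ℕ) = -2 * n - 2 by push_cast; ring] at this
      rcases (by omega : s = n + 3 ∨ s = -2 * n - 1 ∨ s = -2 * n - 2 ∨ (-2 * n ≤ s ∧ s ≤ n + 2))
        with rfl | rfl | rfl | ⟨h₁, h₂⟩
      exacts [hr, hl₁, hl₀, ih s h₁ h₂]
  have hd := NeZero.pos d
  obtain ⟨s, ⟨h₁, h₂⟩, rfl⟩ := Fin.exists_mem_Ico_intCast_eq (-2 * ((d - 1) / 3 : ℕ)) x
  exact window ((d - 1) / 3) (by omega) s h₁ (by omega)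

lemma eq_of_derivCoord_eq (hu : ∀ m, u m ≠ 0) {v : EuclideanSpace ℝ (Fin d)}
    (h : ∀ n : ℕ, 3 * n < d → ∀ t : ℤ, 0 ≤ t → t ≤ 2 → derivCoord n t v = derivCoord n t u) :
    v = u := by
  ext x
  exact forall_of_window_edges (fun x => v x = u x)
    (fun n hn t h₀ h₂ hS =>
      (affineInCoordAt_derivCoord_right hu hn t).coord_eq hS (h n hn t h₀ h₂))
    (fun n hn t h₀ h₂ hS =>
      (affineInCoordAt_derivCoord_left hu hn t).coord_eq hS (h n hn t h₀ h₂)) x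

lemma eq_zero_of_fderiv_derivCoord_eq_zero (hu : ∀ m, u m ≠ 0) {w : EuclideanSpace ℝ (Fin d)}
    (h : ∀ n : ℕ, 3 * n < d → ∀ t : ℤ, 0 ≤ t → t ≤ 2 → fderiv ℝ (derivCoord n t) u w = 0) :
    w = 0 := by
  ext x
  exact forall_of_window_edges (fun x => w x = 0)
    (fun n hn t h₀ h₂ hS => (affineInCoordAt_derivCoord_right hu hn t).coord_eq_zero
      (differentiable_derivCoord n t u) hS (h n hn t h₀ h₂))
    (fun n hn t h₀ h₂ hS => (affineInCoordAt_derivCoord_left hu hn t).coord_eq_zero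
      (differentiable_derivCoord n t u) hS (h n hn t h₀ h₂)) x

end Lorenz96

/-- for the Lorenz 96' system (with `A` the identity), observing
the first three coordinates of `D^i v` for `0 ≤ i ≤ d - 3` determines the
initial condition whenever all of its coordinates are nonzero, and the
gradients of these observed quantities span `ℝ^d`. -/
theorem lorenz96_derivative_conditions (d : ℕ) (hd : 4 ≤ d)
    (u : EuclideanSpace ℝ (Fin d)) (hu : ∀ m : Fin d, u m ≠ 0) :
    haveI : NeZero d := ⟨by omega⟩
    (∀ v : EuclideanSpace ℝ (Fin d),
      (∀ i ≤ d - 3, ∀ m : Fin 3,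
        formalDeriv (fun x => x) (lorenz96B d) (lorenz96f d) i v
            (Fin.castLE (by omega) m) =
          formalDeriv (fun x => x) (lorenz96B d) (lorenz96f d) i u
            (Fin.castLE (by omega) m)) → v = u) ∧
    Submodule.span ℝ
      ((fun p : ℕ × Fin 3 => gradient
        (fun v => formalDeriv (fun x => x) (lorenz96B d) (lorenz96f d) p.1 v
          (Fin.castLE (by omega) p.2)) u) '' {p : ℕ × Fin 3 | p.1 ≤ d - 3}) = ⊤ := by
  have : NeZero d := ⟨by omega⟩
  have hcoord (n : ℕ) (m : Fin 3) (v : EuclideanSpace ℝ (Fin d)) :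
      formalDeriv (fun x => x) (lorenz96B d) (lorenz96f d) n v (Fin.castLE (by omega) m) =
        Lorenz96.derivCoord n (m : ℕ) v := by
    have hm : (Fin.castLE (by omega) m : Fin d) = (((m : ℕ) : ℤ) : Fin d) := by
      ext; simp [Nat.mod_eq_of_lt (by omega : (m : ℕ) < d)]
    rw [Lorenz96.derivCoord, hm]
  refine ⟨fun v hv => Lorenz96.eq_of_derivCoord_eq hu fun n hn t h₀ h₂ => ?_, ?_⟩
  · lift t to ℕ using h₀
    simpa only [hcoord] using hv n (by omega) ⟨t, by omega⟩
  · rw [← Submodule.orthogonal_eq_bot_iff, Submodule.eq_bot_iff]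
    intro w hw
    refine Lorenz96.eq_zero_of_fderiv_derivCoord_eq_zero hu fun n hn t h₀ h₂ => ?_
    lift t to ℕ using h₀
    simpa only [inner_gradient_left, hcoord] using (Submodule.mem_orthogonal _ w).1 hw _
      (Submodule.subset_span ⟨(n, ⟨t, by omega⟩), by simp; omega, rfl⟩)
end
end
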